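/- Let Ω ⊂ ℝ^N be a bounded open set, 0 < s < 1, p ∈ [2, ∞), α > 0, ε > 0, n ∈ ℕ, κ ≥ α a.e., and F_n as in the regularization (F_n(τ) ≥ τ for τ ≤ n²+1 and F_n(τ) = n²+1 for τ > n²+1). Let ω(x,y) := |x−y|^{−(N+2s−2)} and dμ := ω dx dy on Ω×Ω. For u ∈ W^{s,2}(Ω), with A_n(u) := {(x,y) ∈ Ω×Ω : |u(x)−u(y)|/|x−y|^s > √(n²+1)} and E as before, there is a constant C depending only on Ω, N, s, p such that μ(A_n(u)) ≤ C α^{−1} n^{−p} E. -/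
import Mathlib

open MeasureTheory

theorem levelset_weighted_measure_bound (N : ℕ)
    (Ω : Set (EuclideanSpace ℝ (Fin N))) (hΩo : IsOpen Ω) (hΩb : Bornology.IsBounded Ω)
    (s p : ℝ) (hs0 : 0 < s) (hs1 : s < 1) (hp : 2 ≤ p) :
    ∃ C > 0, ∀ (α ε : ℝ) (n : ℕ) (κ : EuclideanSpace ℝ (Fin N) → ℝ) (F : ℝ → ℝ)
      (u : EuclideanSpace ℝ (Fin N) → ℝ),
      0 < α → 0 < ε → 1 ≤ n → Measurable u → Measurable κ → Measurable F →
      (∀ x, α ≤ κ x) →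
      (∀ τ : ℝ, 0 ≤ τ → τ ≤ (n : ℝ) ^ 2 + 1 → τ ≤ F τ) →
      (∀ τ : ℝ, (n : ℝ) ^ 2 + 1 < τ → F τ = (n : ℝ) ^ 2 + 1) →
      (∀ τ : ℝ, 0 ≤ τ → 0 ≤ F τ) →
      (∫⁻ z in {z : EuclideanSpace ℝ (Fin N) × EuclideanSpace ℝ (Fin N) |
            z.1 ∈ Ω ∧ z.2 ∈ Ω ∧
            Real.sqrt ((n : ℝ) ^ 2 + 1) < |u z.1 - u z.2| / ‖z.1 - z.2‖ ^ s},
          ENNReal.ofReal (‖z.1 - z.2‖ ^ (-((N : ℝ) + 2 * s - 2)))) ≤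
        ENNReal.ofReal (C / (α * (n : ℝ) ^ p)) *
          ∫⁻ x in Ω, ∫⁻ y in Ω,
            ENNReal.ofReal (κ (x - y) *
              (ε + F (|u x - u y| ^ 2 / ‖x - y‖ ^ (2 * s))) ^ ((p - 2) / 2) *
              (|u x - u y| ^ 2 / ‖x - y‖ ^ ((N : ℝ) + 2 * s))) := by
  classical
  obtain ⟨R, hR⟩ := hΩb.subset_closedBall 0
  set D : ℝ := max (2 * R) 1 with hDdef
  have hD1 : (1 : ℝ) ≤ D := le_max_right _ _
  have hD0 : (0 : ℝ) < D := lt_of_lt_of_le one_pos hD1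
  set C : ℝ := D ^ (2 - 2 * s) with hCdef
  have hC0 : (0 : ℝ) < C := Real.rpow_pos_of_pos hD0 _
  refine ⟨C, hC0, ?_⟩
  intro α ε n κ F u hα hε hn hu hκm hFm hκ hF1 hF2 hF3
  set g : EuclideanSpace ℝ (Fin N) × EuclideanSpace ℝ (Fin N) → ℝ := fun z =>
    κ (z.1 - z.2) * (ε + F (|u z.1 - u z.2| ^ 2 / ‖z.1 - z.2‖ ^ (2 * s))) ^ ((p - 2) / 2) *
      (|u z.1 - u z.2| ^ 2 / ‖z.1 - z.2‖ ^ ((N : ℝ) + 2 * s)) with hgdef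
  set A : Set (EuclideanSpace ℝ (Fin N) × EuclideanSpace ℝ (Fin N)) := {z |
      z.1 ∈ Ω ∧ z.2 ∈ Ω ∧
      Real.sqrt ((n : ℝ) ^ 2 + 1) < |u z.1 - u z.2| / ‖z.1 - z.2‖ ^ s} with hAdef
  have hn1 : (1 : ℝ) ≤ (n : ℝ) := by exact_mod_cast hn
  have hn0 : (0 : ℝ) < (n : ℝ) := lt_of_lt_of_le one_pos hn1
  have hnp : (0 : ℝ) < (n : ℝ) ^ p := Real.rpow_pos_of_pos hn0 _
  have hu1 : Measurable fun z : EuclideanSpace ℝ (Fin N) × EuclideanSpace ℝ (Fin N) =>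
      |u z.1 - u z.2| := ((hu.comp measurable_fst).sub (hu.comp measurable_snd)).abs
  have hnorm : Measurable fun z : EuclideanSpace ℝ (Fin N) × EuclideanSpace ℝ (Fin N) =>
      ‖z.1 - z.2‖ := (measurable_fst.sub measurable_snd).norm
  -- measurability of A
  have hmA : MeasurableSet A := by
    have h1 : MeasurableSet {z : EuclideanSpace ℝ (Fin N) × EuclideanSpace ℝ (Fin N) |
        z.1 ∈ Ω} := measurable_fst hΩo.measurableSet
    have h2 : MeasurableSet {z : EuclideanSpace ℝ (Fin N) × EuclideanSpace ℝ (Fin N) |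
        z.2 ∈ Ω} := measurable_snd hΩo.measurableSet
    have hmf : Measurable fun z : EuclideanSpace ℝ (Fin N) × EuclideanSpace ℝ (Fin N) =>
        |u z.1 - u z.2| / ‖z.1 - z.2‖ ^ s :=
      hu1.div ((Real.continuous_rpow_const hs0.le).measurable.comp hnorm)
    have h3 : MeasurableSet {z : EuclideanSpace ℝ (Fin N) × EuclideanSpace ℝ (Fin N) |
        Real.sqrt ((n : ℝ) ^ 2 + 1) < |u z.1 - u z.2| / ‖z.1 - z.2‖ ^ s} :=
      measurableSet_lt measurable_const hmf
    have : A = ({z : EuclideanSpace ℝ (Fin N) × EuclideanSpace ℝ (Fin N) | z.1 ∈ Ω} ∩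
        {z : EuclideanSpace ℝ (Fin N) × EuclideanSpace ℝ (Fin N) | z.2 ∈ Ω}) ∩
        {z : EuclideanSpace ℝ (Fin N) × EuclideanSpace ℝ (Fin N) |
        Real.sqrt ((n : ℝ) ^ 2 + 1) < |u z.1 - u z.2| / ‖z.1 - z.2‖ ^ s} := by
      ext z; simp [hAdef, Set.mem_setOf_eq, and_assoc]
    rw [this]
    exact (h1.inter h2).inter h3
  -- measurability of g
  have hmg : Measurable fun z : EuclideanSpace ℝ (Fin N) × EuclideanSpace ℝ (Fin N) =>
      ENNReal.ofReal (g z) := by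
    apply Measurable.ennreal_ofReal
    have hd : Measurable fun z : EuclideanSpace ℝ (Fin N) × EuclideanSpace ℝ (Fin N) =>
        |u z.1 - u z.2| ^ 2 := hu1.pow measurable_const
    rw [hgdef]
    apply Measurable.mul
    apply Measurable.mul
    · exact hκm.comp (measurable_fst.sub measurable_snd)
    · refine (Real.continuous_rpow_const ?_).measurable.comp ?_
      · linarith
      · exact measurable_const.add (hFm.comp (hd.div
          ((Real.continuous_rpow_const (by linarith)).measurable.comp hnorm)))
    · exact hd.div ((Real.continuous_rpow_const (by positivity)).measurable.comp hnorm)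
  -- key pointwise bound
  have hpt : ∀ z ∈ A, ENNReal.ofReal (‖z.1 - z.2‖ ^ (-((N : ℝ) + 2 * s - 2))) ≤
      ENNReal.ofReal (C / (α * (n : ℝ) ^ p)) * ENNReal.ofReal (g z) := by
    intro z hz
    obtain ⟨hx, hy, hlt⟩ : z.1 ∈ Ω ∧ z.2 ∈ Ω ∧
        Real.sqrt ((n : ℝ) ^ 2 + 1) < |u z.1 - u z.2| / ‖z.1 - z.2‖ ^ s := hz
    set r : ℝ := ‖z.1 - z.2‖ with hrdef
    set a : ℝ := |u z.1 - u z.2| with hadef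
    have hsq1 : (0 : ℝ) < (n : ℝ) ^ 2 + 1 := by positivity
    have hsqrt0 : 0 < Real.sqrt ((n : ℝ) ^ 2 + 1) := Real.sqrt_pos.2 hsq1
    have hr : 0 < r := by
      rcases eq_or_lt_of_le (norm_nonneg (z.1 - z.2)) with h | h
      · exfalso
        have : r ^ s = 0 := by rw [hrdef, ← h, Real.zero_rpow hs0.ne']
        rw [this] at hlt
        simp at hlt
        linarith
      · exact h
    have hrD : r ≤ D := by
      have h1 := hR hx
      have h2 := hR hy
      rw [Metric.mem_closedBall] at h1 h2
      have : dist z.1 z.2 ≤ 2 * R := by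
        calc dist z.1 z.2 ≤ dist z.1 0 + dist z.2 0 := dist_triangle_right z.1 z.2 0
        _ ≤ 2 * R := by linarith
      rw [dist_eq_norm] at this
      exact le_trans this (le_max_left _ _)
    have hrs : 0 < r ^ s := Real.rpow_pos_of_pos hr s
    have hr2s : 0 < r ^ (2 * s) := Real.rpow_pos_of_pos hr _
    set τ : ℝ := a ^ 2 / r ^ (2 * s) with hτdef
    have hτgt : (n : ℝ) ^ 2 + 1 < τ := by
      have hsq : Real.sqrt ((n : ℝ) ^ 2 + 1) ^ 2 < (a / r ^ s) ^ 2 :=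
        pow_lt_pow_left₀ hlt (Real.sqrt_nonneg _) two_ne_zero
      rw [Real.sq_sqrt hsq1.le] at hsq
      have heq : (a / r ^ s) ^ 2 = τ := by
        rw [div_pow, hτdef]
        congr 1
        rw [mul_comm 2 s, Real.rpow_mul hr.le]
        norm_num
      rwa [heq] at hsq
    have hFτ : F τ = (n : ℝ) ^ 2 + 1 := hF2 τ hτgt
    have hPge : (n : ℝ) ^ (p - 2) ≤ (ε + F τ) ^ ((p - 2) / 2) := by
      have hcast : (n : ℝ) ^ (2 : ℝ) = (n : ℝ) ^ (2 : ℕ) := by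
        rw [← Real.rpow_natCast (n : ℝ) 2]; norm_num
      have h1 : ((n : ℝ) ^ (2 : ℝ)) ^ ((p - 2) / 2) ≤ (ε + F τ) ^ ((p - 2) / 2) := by
        apply Real.rpow_le_rpow (by positivity) _ (by linarith)
        rw [hFτ, hcast]
        linarith
      calc (n : ℝ) ^ (p - 2) = ((n : ℝ) ^ (2 : ℝ)) ^ ((p - 2) / 2) := by
            rw [← Real.rpow_mul hn0.le]; ring_nf
        _ ≤ _ := h1
    have hlast : a ^ 2 / r ^ ((N : ℝ) + 2 * s) =
        τ * (r ^ (-((N : ℝ) + 2 * s - 2)) * r ^ (2 * s - 2)) := by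
      rw [← Real.rpow_add hr, hτdef, div_mul_eq_mul_div, div_eq_div_iff (by positivity)
        (by positivity), mul_assoc, ← Real.rpow_add hr]
      congr 2
      ring
    have hDr : D ^ (2 * s - 2) ≤ r ^ (2 * s - 2) :=
      Real.rpow_le_rpow_of_nonpos hr hrD (by linarith)
    set ω : ℝ := r ^ (-((N : ℝ) + 2 * s - 2)) with hωdef
    have hω0 : 0 < ω := Real.rpow_pos_of_pos hr _
    have hkey : α * (n : ℝ) ^ (p - 2) * (((n : ℝ) ^ 2 + 1) * (ω * D ^ (2 * s - 2))) ≤ g z := by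
      have hgz : g z = κ (z.1 - z.2) * (ε + F τ) ^ ((p - 2) / 2) *
          (τ * (ω * r ^ (2 * s - 2))) := by
        rw [hgdef]
        simp only
        rw [hlast]
      rw [hgz]
      have hκv : α ≤ κ (z.1 - z.2) := hκ _
      have hτnn : 0 ≤ τ := by positivity
      apply mul_le_mul
      · apply mul_le_mul hκv hPge (by positivity) (le_trans hα.le hκv)
      · apply mul_le_mul hτgt.le
        · exact mul_le_mul_of_nonneg_left hDr hω0.le
        · positivity
        · positivity
      · positivity
      · exact mul_nonneg (le_trans hα.le hκv)
          (Real.rpow_nonneg (by linarith [hF3 τ hτnn]) _)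
    have hDC : D ^ (2 * s - 2) = C⁻¹ := by
      rw [hCdef, ← Real.rpow_neg hD0.le]
      ring_nf
    have hnn : α * (n : ℝ) ^ p / C * ω ≤ g z := by
      have hnsplit : (n : ℝ) ^ p = (n : ℝ) ^ (p - 2) * (n : ℝ) ^ 2 := by
        rw [← Real.rpow_natCast (n : ℝ) 2, ← Real.rpow_add hn0]
        norm_num
      have hωC : (0 : ℝ) ≤ ω * C⁻¹ := mul_nonneg hω0.le (inv_nonneg.mpr hC0.le)
      calc α * (n : ℝ) ^ p / C * ω = α * (n : ℝ) ^ (p - 2) * ((n : ℝ) ^ 2 * (ω * C⁻¹)) := by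
            rw [hnsplit, div_eq_mul_inv]; ring
        _ ≤ α * (n : ℝ) ^ (p - 2) * (((n : ℝ) ^ 2 + 1) * (ω * C⁻¹)) := by
            refine mul_le_mul_of_nonneg_left (mul_le_mul_of_nonneg_right (by linarith) hωC)
              (mul_nonneg hα.le (Real.rpow_nonneg (Nat.cast_nonneg n) _))
        _ ≤ g z := by rw [← hDC] at *; exact hkey
    have hfinal : ω ≤ C / (α * (n : ℝ) ^ p) * g z := by
      calc ω = C / (α * (n : ℝ) ^ p) * (α * (n : ℝ) ^ p / C * ω) := by
            field_simp
        _ ≤ C / (α * (n : ℝ) ^ p) * g z :=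
            mul_le_mul_of_nonneg_left hnn (by positivity)
    calc ENNReal.ofReal ω ≤ ENNReal.ofReal (C / (α * (n : ℝ) ^ p) * g z) :=
          ENNReal.ofReal_le_ofReal hfinal
      _ = ENNReal.ofReal (C / (α * (n : ℝ) ^ p)) * ENNReal.ofReal (g z) :=
          ENNReal.ofReal_mul (by positivity)
  have hAsub : A ⊆ Ω ×ˢ Ω := by
    rintro ⟨x, y⟩ ⟨hx, hy, _⟩
    exact ⟨hx, hy⟩
  calc (∫⁻ z in A, ENNReal.ofReal (‖z.1 - z.2‖ ^ (-((N : ℝ) + 2 * s - 2))))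
      ≤ ∫⁻ z in A, ENNReal.ofReal (C / (α * (n : ℝ) ^ p)) * ENNReal.ofReal (g z) :=
        setLIntegral_mono' hmA hpt
    _ = ENNReal.ofReal (C / (α * (n : ℝ) ^ p)) * ∫⁻ z in A, ENNReal.ofReal (g z) :=
        lintegral_const_mul' _ _ ENNReal.ofReal_ne_top
    _ ≤ ENNReal.ofReal (C / (α * (n : ℝ) ^ p)) * ∫⁻ z in Ω ×ˢ Ω, ENNReal.ofReal (g z) :=
        mul_le_mul_right (lintegral_mono_set hAsub) _
    _ = ENNReal.ofReal (C / (α * (n : ℝ) ^ p)) *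
          ∫⁻ x in Ω, ∫⁻ y in Ω, ENNReal.ofReal (g (x, y)) := by
        congr 1
        rw [Measure.volume_eq_prod, ← Measure.prod_restrict,
          MeasureTheory.lintegral_prod _ hmg.aemeasurable]
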